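/- arXiv:2102.05002 — 3 statements merged into one kernel-verified Lean document; each statement's English description precedes it below -/
import Mathlib

section
/- If (X, d) is a metric space, then any slowly oscillating function f : X → ℝ whose image is finite is glacially oscillating. -/
/-!
The finitely many values of `f` are `δ`-separated for some `δ > 0`, so for each `m` slow
oscillation (with radius `m + 1` and tolerance `δ`) gives a bounded set `K m` outside of which
`f` is constant across jumps of length at most `m`. A glacial scale whose `m`-th pair contains
`K m` with length `m` then makes `f` constant along every chain.
-/

open Metric Bornology Set

/-- A function `f : X → ℝ` is slowly oscillating if for all `r, ε > 0` there is a bounded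
subset `K` of `X` such that `x, y ∉ K` and `dist x y < r` imply `|f x - f y| < ε`. -/
def SlowlyOscillating {X : Type*} [MetricSpace X] (f : X → ℝ) : Prop :=
  ∀ r ε : ℝ, 0 < r → 0 < ε → ∃ K : Set X, IsBounded K ∧
    ∀ x y : X, x ∉ K → y ∉ K → dist x y < r → |f x - f y| < ε

/-- A glacial scale on `X`: a sequence of pairs `(K i, n i)` of bounded subsets of `X` and
natural numbers such that every pair `(K, r)` of a bounded set and a positive real is
dominated by some `(K i, n i)`. -/
def IsGlacialScale {X : Type*} [MetricSpace X] (S : ℕ → Set X × ℕ) : Prop :=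
  (∀ i, IsBounded (S i).1) ∧
  ∀ (K : Set X) (r : ℝ), IsBounded K → 0 < r → ∃ i, K ⊆ (S i).1 ∧ r < ((S i).2 : ℝ)

/-- An `S`-chain for a glacial scale `S`: consecutive points avoid some `K m` and are at
distance at most `n m` from each other. -/
def IsSChain {X : Type*} [MetricSpace X] (S : ℕ → Set X × ℕ) {n : ℕ}
    (x : Fin (n + 1) → X) : Prop :=
  ∀ i : Fin n, ∃ m : ℕ, x i.castSucc ∉ (S m).1 ∧ x i.succ ∉ (S m).1 ∧
    dist (x i.castSucc) (x i.succ) ≤ ((S m).2 : ℝ)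

/-- A function `f : X → ℝ` is glacially oscillating if for each `ε > 0` there is a glacial
scale `S` such that `|f x₁ - f xₙ| < ε` for every `S`-chain `x₁, …, xₙ`. -/
def GlaciallyOscillating {X : Type*} [MetricSpace X] (f : X → ℝ) : Prop :=
  ∀ ε : ℝ, 0 < ε → ∃ S : ℕ → Set X × ℕ, IsGlacialScale S ∧
    ∀ (n : ℕ) (x : Fin (n + 1) → X), IsSChain S x →
      |f (x 0) - f (x (Fin.last n))| < ε

open Filter Topology

theorem Set.Finite.exists_pos_forall_dist_lt_imp_eq {α : Type*} [MetricSpace α] {s : Set α}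
    (hs : s.Finite) : ∃ δ > 0, ∀ u ∈ s, ∀ v ∈ s, dist u v < δ → u = v := by
  have hsep : ∀ᶠ δ in 𝓝[>] (0 : ℝ), ∀ p ∈ s ×ˢ s, dist p.1 p.2 < δ → p.1 = p.2 := by
    refine (hs.prod hs).eventually_all.2 fun p _ => ?_
    by_cases hp : p.1 = p.2
    · exact .of_forall fun _ _ => hp
    · filter_upwards [nhdsWithin_le_nhds (eventually_lt_nhds (dist_pos.2 hp))] with δ hδ hlt
      exact absurd hlt (lt_asymm hδ)
  obtain ⟨δ, hδ, hδpos⟩ := (hsep.and self_mem_nhdsWithin).exists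
  exact ⟨δ, hδpos, fun u hu v hv => hδ (u, v) ⟨hu, hv⟩⟩

theorem exists_isGlacialScale_forall_subset {X : Type*} [MetricSpace X] (K : ℕ → Set X)
    (hK : ∀ m, IsBounded (K m)) :
    ∃ S : ℕ → Set X × ℕ, IsGlacialScale S ∧ ∀ m, K m ⊆ (S m).1 ∧ (S m).2 = m := by
  rcases isEmpty_or_nonempty X with _ | ⟨⟨x₀⟩⟩
  · refine ⟨fun m => (K m, m), ⟨hK, fun B r _ _ => ?_⟩, fun m => ⟨subset_rfl, rfl⟩⟩
    obtain ⟨m, hm⟩ := exists_nat_gt r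
    exact ⟨m, fun b => isEmptyElim b, hm⟩
  · refine ⟨fun m => (K m ∪ closedBall x₀ m, m),
      ⟨fun m => (hK m).union isBounded_closedBall, fun B r hB _ => ?_⟩,
      fun m => ⟨subset_union_left, rfl⟩⟩
    obtain ⟨R, hR⟩ := hB.subset_closedBall x₀
    obtain ⟨m, hm⟩ := exists_nat_gt (max R r)
    exact ⟨m, hR.trans <| (closedBall_subset_closedBall ((le_max_left R r).trans hm.le)).trans
      subset_union_right, (le_max_right R r).trans_lt hm⟩

theorem IsSChain.apply_zero_eq_apply_last {X β : Type*} [MetricSpace X]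
    {S : ℕ → Set X × ℕ} {n : ℕ} {x : Fin (n + 1) → X} (hx : IsSChain S x) (f : X → β)
    (hf : ∀ m a b, a ∉ (S m).1 → b ∉ (S m).1 → dist a b ≤ (S m).2 → f a = f b) :
    f (x 0) = f (x (Fin.last n)) := by
  suffices ∀ i : Fin (n + 1), f (x 0) = f (x i) from this _
  intro i
  induction i using Fin.induction with
  | zero => rfl
  | succ i ih =>
    obtain ⟨m, hi, hi', hdist⟩ := hx i
    exact ih.trans (hf m _ _ hi hi' hdist)

/-- Corollary 3.13: a slowly oscillating function with finite image is glacially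
oscillating. -/
theorem glaciallyOscillating_of_finite_image
    {X : Type*} [MetricSpace X] (f : X → ℝ)
    (hf : SlowlyOscillating f) (hfin : (Set.range f).Finite) :
    GlaciallyOscillating f := by
  intro ε hε
  obtain ⟨δ, hδ, hsep⟩ := hfin.exists_pos_forall_dist_lt_imp_eq
  choose K hKb hK using fun m : ℕ => hf (m + 1) δ (by positivity) hδ
  obtain ⟨S, hS, hKS⟩ := exists_isGlacialScale_forall_subset K hKb
  have hlink : ∀ m a b, a ∉ (S m).1 → b ∉ (S m).1 → dist a b ≤ (S m).2 → f a = f b := by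
    intro m a b ha hb hab
    refine hsep _ ⟨a, rfl⟩ _ ⟨b, rfl⟩ ?_
    rw [Real.dist_eq]
    refine hK m a b (fun h => ha ((hKS m).1 h)) (fun h => hb ((hKS m).1 h)) ?_
    rw [(hKS m).2] at hab
    linarith
  refine ⟨S, hS, fun n x hx => ?_⟩
  rw [hx.apply_zero_eq_apply_last f hlink, sub_self, abs_zero]
  exact hε
end

section
/- If X is a nonempty geodesic metric space and f : X → ℝ, then the following conditions are equivalent: (1) f is glacially oscillating; (2) for each ε > 0 there is a bounded subset K of X such that for every connected component C of X \ K the diameter of f(C) is at most ε. -/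
/-! If `f` is glacially oscillating for a scale `S`, pick `(K, n)` in `S` with `n ≥ 1`: two points
of a connected component of `X \ K` are joined by a chain of steps of length `< 1` inside the
component, and that is an `S`-chain. Conversely, if `K ⊆ closedBall x₀ R`, use the scale
`(closedBall x₀ (R + i), i)`: a step of length at most `i` that starts outside
`closedBall x₀ (R + i)` lies on a geodesic segment avoiding `closedBall x₀ R`, so every chain for
this scale stays in one component of `X \ K`. -/

open Metric Bornology Set

open Relation

namespace Relation

variable {α : Type*} {r : α → α → Prop}

theorem ReflTransGen.exists_fin_chain {a b : α} (h : ReflTransGen r a b) :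
    ∃ (n : ℕ) (x : Fin (n + 1) → α), x 0 = a ∧ x (Fin.last n) = b ∧
      ∀ i : Fin n, r (x i.castSucc) (x i.succ) := by
  induction h with
  | refl => exact ⟨0, fun _ => a, rfl, rfl, Fin.elim0⟩
  | @tail c d _ hcd ih =>
    obtain ⟨n, x, hx0, hxn, hx⟩ := ih
    refine ⟨n + 1, Fin.snoc x d, ?_, Fin.snoc_last .., Fin.lastCases ?_ fun i => ?_⟩
    · rw [← Fin.castSucc_zero, Fin.snoc_castSucc, hx0]
    · rwa [Fin.succ_last, Fin.snoc_last, Fin.snoc_castSucc, hxn]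
    · rw [Fin.succ_castSucc, Fin.snoc_castSucc, Fin.snoc_castSucc]
      exact hx i

theorem reflTransGen_of_fin_chain {n : ℕ} (x : Fin (n + 1) → α)
    (hx : ∀ i : Fin n, r (x i.castSucc) (x i.succ)) :
    ReflTransGen r (x 0) (x (Fin.last n)) := by
  suffices ∀ i, ReflTransGen r (x 0) (x i) from this _
  intro i
  induction i using Fin.induction with
  | zero => rfl
  | succ i ih => exact ih.tail (hx i)

end Relation

theorem IsPreconnected.reflTransGen_dist_lt {X : Type*} [PseudoMetricSpace X] {s : Set X}
    (hs : IsPreconnected s) {δ : ℝ} (hδ : 0 < δ) {a b : X} (ha : a ∈ s) (hb : b ∈ s) :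
    ReflTransGen (fun x y => x ∈ s ∧ y ∈ s ∧ dist x y < δ) a b := by
  let R : X → X → Prop := fun x y => x ∈ s ∧ y ∈ s ∧ dist x y < δ
  have : Std.Symm R := ⟨fun x y ⟨hx, hy, hxy⟩ => ⟨hy, hx, dist_comm x y ▸ hxy⟩⟩
  refine hs.induction₂ (ReflTransGen R) (fun x hx => ?_) (fun _ _ _ _ _ _ => .trans)
    (fun _ _ _ _ => symm) ha hb
  filter_upwards [self_mem_nhdsWithin, nhdsWithin_le_nhds (ball_mem_nhds x hδ)] with y hy hxy
  exact .single ⟨hx, hy, mem_ball'.1 hxy⟩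

theorem Relation.ReflTransGen.eq_or_mem_connectedComponentIn {X : Type*} [TopologicalSpace X]
    {F : Set X} {a b : X} (h : ReflTransGen (fun y z => z ∈ connectedComponentIn F y) a b) :
    a = b ∨ b ∈ connectedComponentIn F a := by
  induction h with
  | refl => exact .inl rfl
  | tail _ hcd ih =>
    rcases ih with rfl | hc
    · exact .inr hcd
    · exact .inr (connectedComponentIn_eq hc ▸ hcd)

section Glacial

variable {X : Type*} [MetricSpace X]

theorem exists_isSChain_of_isPreconnected {S : ℕ → Set X × ℕ} {i : ℕ} (hi : 0 < (S i).2)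
    {C : Set X} (hC : IsPreconnected C) (hCS : C ⊆ (S i).1ᶜ) {a b : X} (ha : a ∈ C)
    (hb : b ∈ C) :
    ∃ (n : ℕ) (x : Fin (n + 1) → X), IsSChain S x ∧ x 0 = a ∧ x (Fin.last n) = b := by
  obtain ⟨n, x, hx0, hxn, hx⟩ :=
    (hC.reflTransGen_dist_lt (Nat.cast_pos.2 hi) ha hb).exists_fin_chain
  refine ⟨n, x, fun j => ⟨i, ?_⟩, hx0, hxn⟩
  obtain ⟨hxj, hxj', hdist⟩ := hx j
  exact ⟨hCS hxj, hCS hxj', hdist.le⟩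

theorem GlaciallyOscillating.exists_isBounded_abs_sub_lt_of_mem_connectedComponentIn
    {f : X → ℝ} (hf : GlaciallyOscillating f) {ε : ℝ} (hε : 0 < ε) :
    ∃ K : Set X, IsBounded K ∧ ∀ x, ∀ a ∈ connectedComponentIn Kᶜ x,
      ∀ b ∈ connectedComponentIn Kᶜ x, |f a - f b| < ε := by
  obtain ⟨S, ⟨hSb, hSdom⟩, hSf⟩ := hf ε hε
  obtain ⟨i, -, hi⟩ := hSdom ∅ 1 isBounded_empty one_pos
  refine ⟨(S i).1, hSb i, fun x a ha b hb => ?_⟩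
  obtain ⟨n, y, hy, rfl, rfl⟩ := exists_isSChain_of_isPreconnected
    (Nat.cast_pos.1 (one_pos.trans hi)) isPreconnected_connectedComponentIn
    (connectedComponentIn_subset _ x) ha hb
  exact hSf n y hy

theorem isGlacialScale_closedBall (x₀ : X) (R : ℝ) :
    IsGlacialScale fun i : ℕ => (closedBall x₀ (R + i), i) := by
  refine ⟨fun i => isBounded_closedBall, fun K r hK _ => ?_⟩
  obtain ⟨R', hR'⟩ := hK.subset_closedBall x₀
  have hceil := Nat.le_ceil (max (R' - R) r)
  refine ⟨⌈max (R' - R) r⌉₊ + 1, hR'.trans (closedBall_subset_closedBall ?_), ?_⟩ <;>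
    push_cast <;> linarith [le_max_left (R' - R) r, le_max_right (R' - R) r]

end Glacial

def IsGeodesicSpace (X : Type*) [PseudoMetricSpace X] : Prop :=
  ∀ x y : X, ∃ γ : ℝ → X, γ 0 = x ∧ γ (dist x y) = y ∧
    ∀ s ∈ Icc (0 : ℝ) (dist x y), ∀ t ∈ Icc (0 : ℝ) (dist x y), dist (γ s) (γ t) = |s - t|

namespace IsGeodesicSpace

section

variable {X : Type*} [PseudoMetricSpace X]

theorem exists_isPreconnected_subset_closedBall (h : IsGeodesicSpace X) (x y : X) :
    ∃ C : Set X, IsPreconnected C ∧ x ∈ C ∧ y ∈ C ∧ C ⊆ closedBall x (dist x y) := by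
  obtain ⟨γ, hγ0, hγ1, hγ⟩ := h x y
  have h0 : (0 : ℝ) ∈ Icc 0 (dist x y) := left_mem_Icc.2 dist_nonneg
  have hcont : ContinuousOn γ (Icc 0 (dist x y)) :=
    (LipschitzOnWith.of_dist_le_mul (K := 1) fun s hs t ht => by
      simp [hγ s hs t ht, Real.dist_eq]).continuousOn
  refine ⟨γ '' Icc 0 (dist x y), isPreconnected_Icc.image γ hcont, ⟨0, h0, hγ0⟩,
    ⟨_, right_mem_Icc.2 dist_nonneg, hγ1⟩, ?_⟩
  rintro _ ⟨t, ht, rfl⟩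
  have hγt := hγ t ht 0 h0
  rw [hγ0, sub_zero, abs_of_nonneg ht.1] at hγt
  exact mem_closedBall.2 (hγt.trans_le ht.2)

theorem mem_connectedComponentIn_compl_closedBall (h : IsGeodesicSpace X) {x₀ x y : X}
    {R : ℝ} (hxy : dist x y + R < dist x x₀) :
    y ∈ connectedComponentIn (closedBall x₀ R)ᶜ x := by
  obtain ⟨C, hC, hxC, hyC, hCx⟩ := h.exists_isPreconnected_subset_closedBall x y
  have hdisj := closedBall_disjoint_closedBall hxy
  exact hC.subset_connectedComponentIn hxC (hCx.trans hdisj.subset_compl_right) hyC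

end

variable {X : Type*} [MetricSpace X]

theorem eq_or_mem_connectedComponentIn_of_isSChain (h : IsGeodesicSpace X) {x₀ : X} {R : ℝ}
    {n : ℕ} {x : Fin (n + 1) → X} (hx : IsSChain (fun i : ℕ => (closedBall x₀ (R + i), i)) x) :
    x 0 = x (Fin.last n) ∨ x (Fin.last n) ∈ connectedComponentIn (closedBall x₀ R)ᶜ (x 0) := by
  have hstep (i : Fin n) : x i.succ ∈ connectedComponentIn (closedBall x₀ R)ᶜ (x i.castSucc) := by
    obtain ⟨m, hm, -, hdist⟩ := hx i
    refine h.mem_connectedComponentIn_compl_closedBall ?_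
    linarith [not_le.1 (mt mem_closedBall.2 hm)]
  exact (reflTransGen_of_fin_chain x hstep).eq_or_mem_connectedComponentIn

theorem glaciallyOscillating [Nonempty X] (h : IsGeodesicSpace X) {f : X → ℝ}
    (hf : ∀ ε : ℝ, 0 < ε → ∃ K : Set X, IsBounded K ∧
      ∀ x : X, x ∉ K → ∀ a ∈ connectedComponentIn Kᶜ x, ∀ b ∈ connectedComponentIn Kᶜ x,
        |f a - f b| ≤ ε) :
    GlaciallyOscillating f := by
  intro ε hε
  obtain ⟨K, hK, hKf⟩ := hf (ε / 2) (half_pos hε)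
  obtain ⟨x₀⟩ := ‹Nonempty X›
  obtain ⟨R, hKR⟩ := hK.subset_closedBall x₀
  refine ⟨_, isGlacialScale_closedBall x₀ R, fun n x hx => ?_⟩
  rcases h.eq_or_mem_connectedComponentIn_of_isSChain hx with heq | hmem
  · simpa [heq] using hε
  have hcompl : (closedBall x₀ R)ᶜ ⊆ Kᶜ := compl_subset_compl.2 hKR
  have hx0 : x 0 ∉ K := hcompl (connectedComponentIn_nonempty_iff.1 ⟨_, hmem⟩)
  have hfx := hKf (x 0) hx0 (x 0) (mem_connectedComponentIn hx0) (x (Fin.last n))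
    (connectedComponentIn_mono _ hcompl hmem)
  linarith

end IsGeodesicSpace

/-- Proposition 3.14: for a geodesic space `X` and `f : X → ℝ`, `f` is glacially
oscillating iff for each `ε > 0` there is a bounded set `K` such that `f` varies by at
most `ε` on every connected component of `X \ K`. -/
theorem glaciallyOscillating_iff_components_of_geodesic
    {X : Type*} [MetricSpace X] [Nonempty X]
    (hgeo : ∀ x y : X, ∃ γ : ℝ → X, γ 0 = x ∧ γ (dist x y) = y ∧
      ∀ s ∈ Set.Icc (0 : ℝ) (dist x y), ∀ t ∈ Set.Icc (0 : ℝ) (dist x y),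
        dist (γ s) (γ t) = |s - t|)
    (f : X → ℝ) :
    GlaciallyOscillating f ↔
      ∀ ε : ℝ, 0 < ε → ∃ K : Set X, IsBounded K ∧
        ∀ x : X, x ∉ K → ∀ a ∈ connectedComponentIn Kᶜ x, ∀ b ∈ connectedComponentIn Kᶜ x,
          |f a - f b| ≤ ε := by
  refine ⟨fun hf ε hε => ?_, IsGeodesicSpace.glaciallyOscillating hgeo⟩
  obtain ⟨K, hK, hKf⟩ := hf.exists_isBounded_abs_sub_lt_of_mem_connectedComponentIn hε
  exact ⟨K, hK, fun x _ a ha b hb => (hKf x a ha b hb).le⟩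
end

section
/- Let G be a countable group with exactly 2 ends; that is, G contains two disjoint infinite almost invariant subsets, but does not contain three pairwise disjoint infinite almost invariant subsets. Then G is finitely generated and contains an infinite cyclic subgroup of finite index. -/
open Set

/-- A subset `A` of a group `G` is almost invariant if `A Δ (A·g)` is finite for every
`g : G`. -/
def AlmostInvariant {G : Type*} [Group G] (A : Set G) : Prop :=
  ∀ g : G, (symmDiff A ((fun a => a * g) '' A)).Finite

/-!
Fix an infinite almost invariant set `A` with infinite complement. As there are no three disjoint
infinite almost invariant sets, every almost invariant `C` with `C`, `Cᶜ` infinite is almost equal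
to `A` or to `Aᶜ`, so the almost stabilizer `H` of `A` (the `g` with `gA Δ A` finite) has index at
most two. If `Λ ≤ H` is generated by a finite set `S`, a right coset of `Λ` missing the finite set
`⋃ s ∈ S, sA Δ A` lies on one side of `A`; as right translates of `A` are almost `A`, an infinite
such `Λ` has finite index.

A countable locally finite group is an increasing union of finite subgroups, and grouping the
layers of this union into three infinite families gives three ends. So `H` contains an infinite
finitely generated subgroup, of finite index, and `G` is finitely generated. In a Cayley graph the
complement of the boundary of `A` then has an infinite component `K ⊆ Aᶜ`. If `x ∈ H` moves the
boundary and a point `v ∈ K` into `A`, then `x⁻¹K` lies in an infinite component inside `Aᶜ`,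
which can only be `K`, and misses `v`; so `x⁻¹K ⊊ K`, `x` has infinite order and `⟨x⟩ ≤ H` has
finite index.
-/

open Pointwise MulOpposite
open scoped symmDiff

section AlmostStabilizer

variable (α : Type*) {β : Type*} [Group α] [MulAction α β]

def almostStabilizer (A : Set β) : Subgroup α where
  carrier := {g | ((g • A) ∆ A).Finite}
  one_mem' := by simp
  mul_mem' {a b} ha hb := by
    refine ((hb.smul_set (a := a)).union ha).subset ?_
    rw [mul_smul, smul_set_symmDiff]
    exact symmDiff_triangle _ _ _
  inv_mem' {a} ha := by
    have := ha.smul_set (a := a⁻¹)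
    rwa [smul_set_symmDiff, inv_smul_smul, symmDiff_comm] at this

variable {α} {A : Set β} {g : α}

theorem mem_almostStabilizer : g ∈ almostStabilizer α A ↔ ((g • A) ∆ A).Finite := Iff.rfl

@[simp]
theorem almostStabilizer_compl : almostStabilizer α Aᶜ = almostStabilizer α A := by
  ext g
  simp [mem_almostStabilizer, smul_set_compl]

end AlmostStabilizer

section TwoEnds

variable {G : Type*} [Group G] {A C : Set G}

theorem finiteIndex_of_rightCosets_meet {Λ : Subgroup G} {E : Set G} (hE : E.Finite)
    (h : ∀ y : G, (op y • (Λ : Set G) ∩ E).Nonempty) : Λ.FiniteIndex := by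
  rw [Subgroup.finiteIndex_iff_finite_quotient, ← Set.finite_univ_iff]
  refine (hE.image fun e => ((e⁻¹ : G) : G ⧸ Λ)).subset fun q _ => ?_
  obtain ⟨y, rfl⟩ := QuotientGroup.mk_surjective q
  obtain ⟨_, ⟨w, hw, rfl⟩, he⟩ := h y⁻¹
  exact ⟨_, he, QuotientGroup.eq.2 (by simpa [op_smul_eq_mul] using hw)⟩

theorem group_fg_of_fg_of_finiteIndex {K : Subgroup G} [K.FiniteIndex] (hK : K.FG) :
    Group.FG G := by
  obtain ⟨S, hS⟩ := hK
  refine Group.fg_iff.2 ⟨S ∪ range (fun q : G ⧸ K => q.out), ?_,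
    S.finite_toSet.union (finite_range _)⟩
  refine (Subgroup.eq_top_iff' _).2 fun x => ?_
  obtain ⟨k, hk⟩ := QuotientGroup.mk_out_eq_mul K x
  rw [← mul_inv_cancel_right x k, ← hk]
  refine mul_mem (Subgroup.subset_closure (Or.inr ⟨_, rfl⟩)) ?_
  exact Subgroup.closure_mono subset_union_left (by rw [hS]; exact inv_mem k.2)

theorem Subgroup.infinite_of_finiteIndex [Infinite G] (H : Subgroup G) [H.FiniteIndex] :
    (H : Set G).Infinite := fun hH =>
  have := (Subgroup.finite_iff_finite_and_finiteIndex H).2 ⟨hH.to_subtype, inferInstance⟩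
  not_finite G

theorem exists_fg_infinite_le_of_finiteIndex (H : Subgroup G) [H.FiniteIndex] {Λ : Subgroup G}
    (hfg : Λ.FG) (hΛ : (Λ : Set G).Infinite) : ∃ K ≤ H, K.FG ∧ (K : Set G).Infinite := by
  have : Group.FG Λ := (Group.fg_iff_subgroup_fg Λ).2 hfg
  have : Infinite Λ := hΛ.to_subtype
  refine ⟨(H.subgroupOf Λ).map Λ.subtype, ?_, ?_, ?_⟩
  · rw [Subgroup.subgroupOf_map_subtype]
    exact inf_le_left
  · rw [← Group.fg_iff_subgroup_fg]
    exact Group.fg_of_surjective (f := ((H.subgroupOf Λ).equivMapOfInjective _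
      Λ.subtype_injective).toMonoidHom) (MulEquiv.surjective _)
  · rw [Subgroup.coe_map]
    exact (H.subgroupOf Λ).infinite_of_finiteIndex.image Subtype.val_injective.injOn

theorem not_isOfFinOrder_of_smul_ssubset {β : Type*} [MulAction G β] {Y : Set β} {g : G}
    (h : g • Y ⊂ Y) : ¬ IsOfFinOrder g := by
  intro hg
  have pow_smul_subset (n : ℕ) : g ^ (n + 1) • Y ⊆ g • Y := by
    induction n with
    | zero => simp
    | succ n ih =>
      rw [pow_succ, mul_smul]
      exact (smul_set_mono h.subset).trans ih
  obtain ⟨n, hn, hgn⟩ := isOfFinOrder_iff_pow_eq_one.1 hg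
  obtain ⟨m, rfl⟩ := Nat.exists_eq_succ_of_ne_zero hn.ne'
  exact h.2 (by simpa [hgn] using pow_smul_subset m)

theorem almostInvariant_iff : AlmostInvariant A ↔ ∀ g : G, op g ∈ almostStabilizer Gᵐᵒᵖ A :=
  forall_congr' fun g => by rw [mem_almostStabilizer, symmDiff_comm]; exact Iff.rfl

namespace AlmostInvariant

theorem compl (hA : AlmostInvariant A) : AlmostInvariant Aᶜ := by
  simpa [almostInvariant_iff] using hA

theorem inter (hA : AlmostInvariant A) (hC : AlmostInvariant C) : AlmostInvariant (A ∩ C) := by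
  rw [almostInvariant_iff] at *
  refine fun g => ((hA g).union (hC g)).subset fun x => ?_
  simp only [smul_set_inter, Set.mem_symmDiff, Set.mem_inter_iff, Set.mem_union]
  tauto

theorem smul (hA : AlmostInvariant A) (g : G) : AlmostInvariant (g • A) := by
  rw [almostInvariant_iff] at *
  intro t
  rw [mem_almostStabilizer, smul_comm, ← smul_set_symmDiff]
  exact (hA t).smul_set

theorem of_finite (hA : A.Finite) : AlmostInvariant A :=
  almostInvariant_iff.2 fun _ => hA.smul_set.symmDiff hA

end AlmostInvariant

variable (G) in
def AtMostTwoEnds : Prop :=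
  ¬ ∃ A : Fin 3 → Set G, (∀ i, (A i).Infinite ∧ AlmostInvariant (A i)) ∧
    Pairwise (Function.onFun Disjoint A)

namespace AtMostTwoEnds

theorem false_of_pairwise_disjoint (hG : AtMostTwoEnds G) {X Y Z : Set G}
    (hX : AlmostInvariant X) (hY : AlmostInvariant Y) (hZ : AlmostInvariant Z)
    (hXi : X.Infinite) (hYi : Y.Infinite) (hZi : Z.Infinite)
    (hXY : Disjoint X Y) (hXZ : Disjoint X Z) (hYZ : Disjoint Y Z) : False := by
  refine hG ⟨![X, Y, Z], fun i => ?_, fun i j hij => ?_⟩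
  · fin_cases i <;> simp [*]
  · fin_cases i <;> fin_cases j <;> simp_all [Function.onFun, Disjoint.symm]

/-- Of the four pairwise disjoint almost invariant sets `A ∩ C`, `A ∩ Cᶜ`, `Aᶜ ∩ C`, `Aᶜ ∩ Cᶜ`
at most two are infinite, while each of `A`, `Aᶜ`, `C`, `Cᶜ` contains an infinite one: the two
infinite ones lie on a diagonal. -/
theorem finite_symmDiff_or_finite_symmDiff_compl (hG : AtMostTwoEnds G)
    (hA : AlmostInvariant A) (hAi : A.Infinite) (hAci : Aᶜ.Infinite)
    (hC : AlmostInvariant C) (hCi : C.Infinite) (hCci : Cᶜ.Infinite) :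
    (C ∆ A).Finite ∨ (C ∆ Aᶜ).Finite := by
  have split {X Y : Set G} (hX : X.Infinite) (hXY : (X ∩ Y).Finite) : (X ∩ Yᶜ).Infinite :=
    fun h => hX (by simpa using hXY.union h)
  have split' {X Y : Set G} (hX : X.Infinite) (hXY : (Y ∩ X).Finite) : (Yᶜ ∩ X).Infinite := by
    rw [inter_comm] at hXY ⊢
    exact split hX hXY
  have dA {X Y : Set G} : Disjoint (A ∩ X) (Aᶜ ∩ Y) :=
    disjoint_compl_right.mono inter_subset_left inter_subset_left
  have dC {X Y : Set G} : Disjoint (X ∩ C) (Y ∩ Cᶜ) :=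
    disjoint_compl_right.mono inter_subset_right inter_subset_right
  have hP := hA.inter hC
  have hQ := hA.inter hC.compl
  have hR := hA.compl.inter hC
  have hS := hA.compl.inter hC.compl
  by_cases hp : (A ∩ C).Finite
  · have hs : (Aᶜ ∩ Cᶜ).Finite := not_not.1 fun hs =>
      hG.false_of_pairwise_disjoint hQ hR hS (split hAi hp) (split' hCi hp) hs dA dA dC
    refine .inr ((hp.union hs).subset fun x => ?_)
    simp only [mem_symmDiff, mem_union, mem_inter_iff, mem_compl_iff]
    tauto
  by_cases hs : (Aᶜ ∩ Cᶜ).Finite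
  · exact (hG.false_of_pairwise_disjoint hP hQ hR hp (by simpa using split' hCci hs)
      (by simpa using split hAci hs) dC dA dA).elim
  have hq : (A ∩ Cᶜ).Finite := not_not.1 fun hq =>
    hG.false_of_pairwise_disjoint hP hQ hS hp hq hs dC dA dA
  have hr : (Aᶜ ∩ C).Finite := not_not.1 fun hr =>
    hG.false_of_pairwise_disjoint hP hR hS hp hr hs dA dA dC
  refine .inl ((hq.union hr).subset fun x => ?_)
  simp only [mem_symmDiff, mem_union, mem_inter_iff, mem_compl_iff]
  tauto

theorem finite_smul_symmDiff_compl_of_notMem (hG : AtMostTwoEnds G)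
    (hA : AlmostInvariant A) (hAi : A.Infinite) (hAci : Aᶜ.Infinite) {g : G}
    (hg : g ∉ almostStabilizer G A) : ((g • A) ∆ Aᶜ).Finite := by
  refine (hG.finite_symmDiff_or_finite_symmDiff_compl hA hAi hAci (hA.smul g) hAi.smul_set
    ?_).resolve_left hg
  rw [← smul_set_compl]
  exact hAci.smul_set

theorem finiteIndex_almostStabilizer (hG : AtMostTwoEnds G)
    (hA : AlmostInvariant A) (hAi : A.Infinite) (hAci : Aᶜ.Infinite) :
    (almostStabilizer G A).FiniteIndex := by
  by_cases hH : ∀ g, g ∈ almostStabilizer G A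
  · rw [(Subgroup.eq_top_iff' _).2 hH]
    infer_instance
  obtain ⟨a, ha⟩ := not_forall.1 hH
  suffices (almostStabilizer G A).index = 2 from ⟨by omega⟩
  refine Subgroup.index_eq_two_iff_exists_notMem_and'.2 ⟨a, ha, fun b => ?_⟩
  refine or_iff_not_imp_right.2 fun hb => ?_
  have hab : ((a • b • A) ∆ (a • A)ᶜ).Finite := by
    rw [← smul_set_compl, ← smul_set_symmDiff]
    exact (hG.finite_smul_symmDiff_compl_of_notMem hA hAi hAci hb).smul_set
  have haA : ((a • A)ᶜ ∆ A).Finite := by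
    have := hG.finite_smul_symmDiff_compl_of_notMem hA hAi hAci ha
    rwa [← compl_symmDiff_compl, compl_compl] at this
  rw [mem_almostStabilizer, mul_smul]
  exact (hab.union haA).subset (symmDiff_triangle _ _ _)

end AtMostTwoEnds

theorem almostInvariant_preimage {β : Type*} {τ : G → β}
    (hτ : ∀ g, {x | τ (x * g) ≠ τ x}.Finite) (L : Set β) : AlmostInvariant (τ ⁻¹' L) := by
  refine almostInvariant_iff.2 fun g => (hτ g⁻¹).subset fun x hx => ?_
  rw [mem_symmDiff, mem_smul_set_iff_inv_smul_mem, ← op_inv, op_smul_eq_mul] at hx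
  intro h
  simp only [mem_preimage, h] at hx
  tauto

theorem not_atMostTwoEnds_of_infinite_range {β : Type*} {τ : G → β}
    (hτ : ∀ g, {x | τ (x * g) ≠ τ x}.Finite) (hrange : (range τ).Infinite) :
    ¬ AtMostTwoEnds G := by
  set e := hrange.natEmbedding
  set L : Fin 3 → Set β := fun i => range fun k => (e (3 * k + i) : β)
  refine not_not.2 ⟨fun i => τ ⁻¹' L i, fun i => ⟨?_, almostInvariant_preimage hτ _⟩, ?_⟩
  · refine Set.Infinite.of_image τ (Set.Infinite.mono ?_
    (infinite_range_of_injective (f := fun k : ℕ => (e (3 * k + i) : β)) ?_))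
    · rintro _ ⟨k, rfl⟩
      obtain ⟨x, hx⟩ := (e (3 * k + i)).2
      exact ⟨x, ⟨k, hx.symm⟩, hx⟩
    · intro k k' h
      have := e.injective (Subtype.ext h)
      omega
  · intro i j hij
    refine Disjoint.preimage τ (Set.disjoint_left.2 ?_)
    rintro _ ⟨k, rfl⟩ ⟨k', hk'⟩
    have := e.injective (Subtype.ext hk')
    exact hij (Fin.ext (by omega))

theorem not_atMostTwoEnds_of_exhaustion [Infinite G] {Γ : ℕ → Subgroup G} (hmono : Monotone Γ)
    (hfin : ∀ n, (Γ n : Set G).Finite) (hcover : ∀ x, ∃ n, x ∈ Γ n) : ¬ AtMostTwoEnds G := by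
  set τ : G → ℕ := fun x => sInf {n | x ∈ Γ n}
  have mem_level x : x ∈ Γ (τ x) := Nat.sInf_mem (hcover x)
  refine not_atMostTwoEnds_of_infinite_range (τ := τ)
    (fun g => (hfin (τ g)).subset fun x hx => ?_) ?_
  · -- outside `Γ (τ g)`, right multiplication by `g` preserves membership in every `Γ n`
    by_contra hxg
    refine hx (congrArg sInf (Set.ext fun n => ?_))
    rcases le_total (τ g) n with h | h
    · exact Subgroup.mul_mem_cancel_right _ (hmono h (mem_level g))
    · exact iff_of_false (fun hn => hxg ((Subgroup.mul_mem_cancel_right _ (mem_level g)).1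
        (hmono h hn))) fun hn => hxg (hmono h hn)
  · intro hfinite
    obtain ⟨N, hN⟩ := hfinite.bddAbove
    exact infinite_univ (α := G) ((hfin N).subset fun x _ => hmono (hN ⟨x, rfl⟩) (mem_level x))

theorem not_atMostTwoEnds_of_locallyFinite [Countable G] [Infinite G]
    (hG : ∀ T : Finset G, (Subgroup.closure (T : Set G) : Set G).Finite) :
    ¬ AtMostTwoEnds G := by
  classical
  obtain ⟨f, hf⟩ := exists_surjective_nat G
  refine not_atMostTwoEnds_of_exhaustion (Γ := fun n => Subgroup.closure
    (((Finset.range n).image f : Finset G) : Set G)) (fun m n h => ?_) (fun n => hG _) ?_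
  · exact Subgroup.closure_mono (Finset.coe_subset.2 (Finset.image_subset_image
      (Finset.range_mono h)))
  · intro x
    obtain ⟨i, rfl⟩ := hf x
    exact ⟨i + 1, Subgroup.subset_closure
      (Finset.mem_image_of_mem f (Finset.self_mem_range_succ i))⟩

section RightCosets

variable {Λ : Subgroup G} {E : Set G}

theorem inter_nonempty_of_crossing {S : Set G} (hS : ∀ s ∈ S, (s • A) ∆ A ⊆ E) {y : G}
    (hA : (op y • (Subgroup.closure S : Set G) ∩ A).Nonempty)
    (hAc : (op y • (Subgroup.closure S : Set G) \ A).Nonempty) :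
    (op y • (Subgroup.closure S : Set G) ∩ E).Nonempty := by
  set D := op y • (Subgroup.closure S : Set G)
  by_contra hDE
  -- `D` misses every `s • A ∆ A`, so the generators preserve `A ∩ D`
  have hstab : Subgroup.closure S ≤ MulAction.stabilizer G (A ∩ D) := by
    refine (Subgroup.closure_le _).2 fun s hs => ?_
    rw [SetLike.mem_coe, MulAction.mem_stabilizer_iff, smul_set_inter, smul_comm,
      smul_coe_set (Subgroup.subset_closure hs)]
    ext x
    refine and_congr_left fun hx => ?_
    by_contra hsA
    exact hDE ⟨x, hx, hS s hs (by rw [mem_symmDiff]; tauto)⟩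
  obtain ⟨a, haD, haA⟩ := hA
  obtain ⟨c, hcD, hcA⟩ := hAc
  obtain ⟨u, hu, rfl⟩ := haD
  obtain ⟨v, hv, rfl⟩ := hcD
  have hvu : v * u⁻¹ ∈ Subgroup.closure S := mul_mem hv (inv_mem hu)
  have hu' : op y • u ∈ A ∩ D := ⟨haA, u, hu, rfl⟩
  have := smul_mem_smul_set (a := v * u⁻¹) hu'
  rw [MulAction.mem_stabilizer_iff.1 (hstab hvu)] at this
  exact hcA (by simpa [op_smul_eq_mul, mul_assoc] using this.1)

/-- A right coset inside `A` forces every right coset to lie in `A` up to a finite set, since the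
cosets are right translates of each other. -/
theorem false_of_rightCoset_subset (hA : AlmostInvariant A) (hAci : Aᶜ.Infinite)
    (hΛ : (Λ : Set G).Infinite) (hE : E.Finite)
    (hcross : ∀ y : G, (op y • (Λ : Set G) ∩ A).Nonempty → (op y • (Λ : Set G) \ A).Nonempty →
      (op y • (Λ : Set G) ∩ E).Nonempty)
    {b : G} (hb : op b • (Λ : Set G) ⊆ A) : False := by
  have almost_subset (y : G) : (op y • (Λ : Set G) \ A).Finite := by
    have hsub : op y • (Λ : Set G) ⊆ op (b⁻¹ * y) • A := by
      rw [← mul_inv_cancel_left b y, op_mul, mul_smul, inv_mul_cancel_left]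
      exact smul_set_mono hb
    exact (almostInvariant_iff.1 hA (b⁻¹ * y)).subset fun x hx =>
      mem_symmDiff.2 (.inl ⟨hsub hx.1, hx.2⟩)
  have hcover : Aᶜ ⊆ ⋃ e ∈ E, op e • (Λ : Set G) \ A := by
    intro x hx
    have hxx : x ∈ op x • (Λ : Set G) := ⟨1, one_mem _, one_mul x⟩
    have hxA : (op x • (Λ : Set G) ∩ A).Nonempty :=
      (hΛ.smul_set.sdiff (almost_subset x)).nonempty.mono fun z hz =>
        ⟨hz.1, not_not.1 fun h => hz.2 ⟨hz.1, h⟩⟩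
    obtain ⟨_, ⟨w, hw, rfl⟩, he⟩ := hcross x hxA ⟨x, hxx, hx⟩
    exact mem_biUnion he ⟨⟨w⁻¹, inv_mem hw, by simp⟩, hx⟩
  exact hAci ((hE.biUnion fun e _ => almost_subset e).subset hcover)

theorem finiteIndex_of_crossing_rightCosets_meet (hA : AlmostInvariant A) (hAi : A.Infinite)
    (hAci : Aᶜ.Infinite) (hΛ : (Λ : Set G).Infinite) (hE : E.Finite)
    (hcross : ∀ y : G, (op y • (Λ : Set G) ∩ A).Nonempty → (op y • (Λ : Set G) \ A).Nonempty →
      (op y • (Λ : Set G) ∩ E).Nonempty) : Λ.FiniteIndex := by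
  by_cases h : ∀ y : G, (op y • (Λ : Set G) ∩ A).Nonempty ∧ (op y • (Λ : Set G) \ A).Nonempty
  · exact finiteIndex_of_rightCosets_meet hE fun y => hcross y (h y).1 (h y).2
  obtain ⟨y, hy⟩ := not_forall.1 h
  rcases not_and_or.1 hy with hy | hy
  · refine (false_of_rightCoset_subset hA.compl (by rwa [compl_compl]) hΛ hE
      (fun y h₁ h₂ => hcross y ?_ ?_) fun x hx hxA => hy ⟨x, hx, hxA⟩).elim
    · simpa [sdiff_compl] using h₂
    · simpa [sdiff_eq] using h₁
  · exact (false_of_rightCoset_subset hA hAci hΛ hE hcross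
      fun x hx => by_contra fun hxA => hy ⟨x, hx, hxA⟩).elim

end RightCosets

theorem finiteIndex_of_fg_of_le_almostStabilizer (hA : AlmostInvariant A) (hAi : A.Infinite)
    (hAci : Aᶜ.Infinite) {Λ : Subgroup G} (hfg : Λ.FG) (hΛ : (Λ : Set G).Infinite)
    (hle : Λ ≤ almostStabilizer G A) : Λ.FiniteIndex := by
  obtain ⟨S, rfl⟩ := hfg
  refine finiteIndex_of_crossing_rightCosets_meet hA hAi hAci hΛ
    (S.finite_toSet.biUnion fun s hs => hle (Subgroup.subset_closure hs))
    fun y => inter_nonempty_of_crossing fun s hs =>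
      subset_biUnion_of_mem (u := fun s => (s • A) ∆ A) hs

theorem AtMostTwoEnds.group_fg [Countable G] (hG : AtMostTwoEnds G) (hA : AlmostInvariant A)
    (hAi : A.Infinite) (hAci : Aᶜ.Infinite) : Group.FG G := by
  have : Infinite G := infinite_univ_iff.1 (hAi.mono (subset_univ A))
  obtain ⟨T, hT⟩ : ∃ T : Finset G, (Subgroup.closure (T : Set G) : Set G).Infinite := by
    by_contra! h
    exact not_atMostTwoEnds_of_locallyFinite h hG
  have := hG.finiteIndex_almostStabilizer hA hAi hAci
  obtain ⟨K, hKH, hKfg, hK⟩ :=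
    exists_fg_infinite_le_of_finiteIndex (almostStabilizer G A) ⟨T, rfl⟩ hT
  have := finiteIndex_of_fg_of_le_almostStabilizer hA hAi hAci hKfg hK hKH
  exact group_fg_of_fg_of_finiteIndex hKfg

section Cayley

variable (S : Set G)

def CayleyAdj (x y : G) : Prop := x⁻¹ * y ∈ S ∨ y⁻¹ * x ∈ S

/-- Paths with all vertices in `X`; the empty path joins `x` to itself even when `x ∉ X`. -/
def CayleyJoined (X : Set G) : G → G → Prop :=
  Relation.ReflTransGen fun x y => x ∈ X ∧ y ∈ X ∧ CayleyAdj S x y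

def cayleyComponent (X : Set G) (x : G) : Set G := {y | CayleyJoined S X x y}

def cayleyBoundary (C : Set G) : Set G := {x | ∃ y, CayleyAdj S x y ∧ (x ∈ C ↔ y ∉ C)}

variable {S} {X : Set G} {x y : G}

theorem CayleyAdj.symm (h : CayleyAdj S x y) : CayleyAdj S y x := Or.symm h

namespace CayleyJoined

theorem symm (h : CayleyJoined S X x y) : CayleyJoined S X y x := by
  induction h with
  | refl => exact .refl
  | tail _ hbc ih => exact .head ⟨hbc.2.1, hbc.1, hbc.2.2.symm⟩ ih

theorem trans {z : G} (hxy : CayleyJoined S X x y) (hyz : CayleyJoined S X y z) :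
    CayleyJoined S X x z :=
  Relation.ReflTransGen.trans hxy hyz

theorem mono {Y : Set G} (hXY : X ⊆ Y) (h : CayleyJoined S X x y) : CayleyJoined S Y x y := by
  induction h with
  | refl => exact .refl
  | tail _ hbc ih => exact ih.tail ⟨hXY hbc.1, hXY hbc.2.1, hbc.2.2⟩

theorem smul (g : G) (h : CayleyJoined S X x y) : CayleyJoined S (g • X) (g * x) (g * y) := by
  induction h with
  | refl => exact .refl
  | tail _ hbc ih => exact ih.tail ⟨smul_mem_smul_set hbc.1, smul_mem_smul_set hbc.2.1,
      by simpa [CayleyAdj, mul_assoc] using hbc.2.2⟩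

theorem in_cayleyComponent (h : CayleyJoined S X x y) :
    CayleyJoined S (cayleyComponent S X x) x y := by
  induction h with
  | refl => exact .refl
  | tail hxb hbc ih => exact ih.tail ⟨hxb, hxb.tail hbc, hbc.2.2⟩

theorem mem_iff {C : Set G} (h : CayleyJoined S (cayleyBoundary S C)ᶜ x y) : x ∈ C ↔ y ∈ C := by
  induction h with
  | refl => rfl
  | tail _ hbc ih => exact ih.trans (not_not.1 fun hne => hbc.1 ⟨_, hbc.2.2, by tauto⟩)

end CayleyJoined

theorem cayleyJoined_univ (hgen : Subgroup.closure S = ⊤) (x y : G) :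
    CayleyJoined S univ x y := by
  have smul_univ (g : G) {a b : G} (h : CayleyJoined S univ a b) :
      CayleyJoined S univ (g * a) (g * b) := by
    simpa only [smul_set_univ] using h.smul g
  suffices h : ∀ g, CayleyJoined S univ 1 g by
    simpa using smul_univ x (h (x⁻¹ * y))
  intro g
  induction (hgen ▸ Subgroup.mem_top g : g ∈ Subgroup.closure S) using
    Subgroup.closure_induction with
  | mem s hs => exact .single ⟨trivial, trivial, .inl (by simpa using hs)⟩
  | one => exact .refl
  | mul a b _ _ ha hb =>
    have hab := smul_univ a hb
    rw [mul_one] at hab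
    exact ha.trans hab
  | inv a _ ha => exact (by simpa using smul_univ a⁻¹ ha : CayleyJoined S univ a⁻¹ 1).symm

theorem AlmostInvariant.finite_cayleyBoundary {A : Set G} (hS : S.Finite)
    (hA : AlmostInvariant A) : (cayleyBoundary S A).Finite := by
  refine (hS.biUnion fun s _ => (almostInvariant_iff.1 hA s).union
    (almostInvariant_iff.1 hA s⁻¹)).subset ?_
  rintro x ⟨y, hxy | hxy, hne⟩
  · refine mem_biUnion hxy (.inr (mem_symmDiff.2 ?_))
    have : x ∈ op (x⁻¹ * y)⁻¹ • A ↔ y ∈ A := by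
      rw [mem_smul_set_iff_inv_smul_mem]; simp
    tauto
  · refine mem_biUnion hxy (.inl (mem_symmDiff.2 ?_))
    have : x ∈ op (y⁻¹ * x) • A ↔ y ∈ A := by
      rw [mem_smul_set_iff_inv_smul_mem]; simp
    tauto

theorem almostInvariant_of_finite_cayleyBoundary {C : Set G} (hgen : Subgroup.closure S = ⊤)
    (hC : (cayleyBoundary S C).Finite) : AlmostInvariant C := by
  refine almostInvariant_iff.2 fun g => ?_
  induction (hgen ▸ Subgroup.mem_top g : g ∈ Subgroup.closure S) using
    Subgroup.closure_induction with
  | mem s hs =>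
    refine hC.subset fun x hx => ⟨x * s⁻¹, .inr (by simpa using hs), ?_⟩
    rw [mem_symmDiff, mem_smul_set_iff_inv_smul_mem] at hx
    simp only [← op_inv, op_smul_eq_mul] at hx
    tauto
  | one => exact one_mem _
  | mul a b _ _ ha hb => exact (op_mul a b).symm ▸ mul_mem hb ha
  | inv a _ ha => exact (op_inv a).symm ▸ inv_mem ha

end Cayley

section Components

variable {S X B : Set G} {x y : G}

theorem cayleyComponent_eq (h : CayleyJoined S X x y) :
    cayleyComponent S X x = cayleyComponent S X y :=
  Set.ext fun _ => ⟨h.symm.trans, h.trans⟩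

theorem cayleyComponent_eq_or_disjoint (x y : G) :
    cayleyComponent S X x = cayleyComponent S X y ∨
      Disjoint (cayleyComponent S X x) (cayleyComponent S X y) := by
  refine or_iff_not_imp_right.2 fun h => ?_
  obtain ⟨z, hxz, hyz⟩ := not_disjoint_iff.1 h
  exact (cayleyComponent_eq hxz).trans (cayleyComponent_eq hyz).symm

theorem cayleyBoundary_cayleyComponent_subset (B : Set G) (x : G) :
    cayleyBoundary S (cayleyComponent S Bᶜ x) ⊆ B ∪ cayleyBoundary S B := by
  rintro z ⟨y, hzy, hne⟩
  by_contra hz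
  rw [mem_union, not_or] at hz
  have hy : y ∉ B := fun hy => hz.2 ⟨y, hzy, by tauto⟩
  by_cases hxz : CayleyJoined S Bᶜ x z
  · exact hne.1 hxz (hxz.tail ⟨hz.1, hy, hzy⟩)
  · exact hxz ((hne.not_left.1 hxz).tail ⟨hy, hz.1, hzy.symm⟩)

theorem almostInvariant_cayleyComponent (hS : S.Finite) (hgen : Subgroup.closure S = ⊤)
    (hB : B.Finite) (x : G) : AlmostInvariant (cayleyComponent S Bᶜ x) :=
  almostInvariant_of_finite_cayleyBoundary hgen ((hB.union
    ((AlmostInvariant.of_finite hB).finite_cayleyBoundary hS)).subset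
    (cayleyBoundary_cayleyComponent_subset B x))

theorem cayleyBoundary_nonempty (hgen : Subgroup.closure S = ⊤) {C : Set G} (hC : C.Nonempty)
    (hCc : Cᶜ.Nonempty) : (cayleyBoundary S C).Nonempty := by
  obtain ⟨a, ha⟩ := hC
  obtain ⟨c, hc⟩ := hCc
  refine nonempty_iff_ne_empty.2 fun h => hc ?_
  exact ((cayleyJoined_univ hgen a c).mono (by rw [h, compl_empty])).mem_iff.1 ha

theorem exists_cayleyJoined_mem_cayleyBoundary (hgen : Subgroup.closure S = ⊤) {b : G}
    (hb : b ∈ B) (hx : x ∉ B) : ∃ y ∈ cayleyBoundary S B \ B, CayleyJoined S Bᶜ x y := by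
  revert hx
  induction cayleyJoined_univ hgen x b using Relation.ReflTransGen.head_induction_on with
  | refl => exact fun hbB => (hbB hb).elim
  | @head _ c hac _ ih =>
    intro ha
    by_cases hc : c ∈ B
    · exact ⟨_, ⟨⟨_, hac.2.2, by tauto⟩, ha⟩, .refl⟩
    · obtain ⟨y, hy, hcy⟩ := ih hc
      exact ⟨y, hy, .head ⟨ha, hc, hac.2.2⟩ hcy⟩

theorem exists_infinite_inter_cayleyComponent (hS : S.Finite) (hgen : Subgroup.closure S = ⊤)
    (hB : B.Finite) (hBne : B.Nonempty) {D : Set G} (hD : D.Infinite) :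
    ∃ y ∉ B, (cayleyComponent S Bᶜ y ∩ D).Infinite := by
  by_contra! h
  obtain ⟨b, hb⟩ := hBne
  have hfin := ((AlmostInvariant.of_finite hB).finite_cayleyBoundary hS).sdiff (t := B)
  refine hD ((hB.union (hfin.biUnion fun y hy => h y hy.2)).subset fun x hx => ?_)
  by_cases hxB : x ∈ B
  · exact .inl hxB
  obtain ⟨y, hy, hxy⟩ := exists_cayleyJoined_mem_cayleyBoundary hgen hb hxB
  exact .inr (mem_biUnion hy ⟨hxy.symm, hx⟩)

end Components

namespace AtMostTwoEnds

variable {S : Set G}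

theorem cayleyComponent_eq_of_subset_compl (hG : AtMostTwoEnds G) (hS : S.Finite)
    (hgen : Subgroup.closure S = ⊤) {B : Set G} (hB : B.Finite) (hA : AlmostInvariant A)
    (hAi : A.Infinite) {x y : G} (hx : (cayleyComponent S Bᶜ x).Infinite)
    (hy : (cayleyComponent S Bᶜ y).Infinite) (hxA : cayleyComponent S Bᶜ x ⊆ Aᶜ)
    (hyA : cayleyComponent S Bᶜ y ⊆ Aᶜ) : cayleyComponent S Bᶜ x = cayleyComponent S Bᶜ y :=
  (cayleyComponent_eq_or_disjoint x y).resolve_right fun hxy =>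
    hG.false_of_pairwise_disjoint hA (almostInvariant_cayleyComponent hS hgen hB x)
      (almostInvariant_cayleyComponent hS hgen hB y) hAi hx hy
      (disjoint_compl_right.mono_right hxA) (disjoint_compl_right.mono_right hyA) hxy

/-- The component `K` avoids `x • ∂A ⊆ A`, so `x⁻¹K` is joined off `∂A`; being infinite and, as
`x ∈ H`, on the side of `Aᶜ`, it lies in `K` again, and it misses `v` since `x * v ∈ A`. -/
theorem inv_smul_cayleyComponent_ssubset (hG : AtMostTwoEnds G) (hS : S.Finite)
    (hgen : Subgroup.closure S = ⊤) (hA : AlmostInvariant A) (hAi : A.Infinite) {v : G}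
    (hK : (cayleyComponent S (cayleyBoundary S A)ᶜ v).Infinite)
    (hKA : cayleyComponent S (cayleyBoundary S A)ᶜ v ⊆ Aᶜ) {x : G}
    (hxH : x ∈ almostStabilizer G A) (hxB : ∀ b ∈ cayleyBoundary S A, x * b ∈ A)
    (hxv : x * v ∈ A) :
    x⁻¹ • cayleyComponent S (cayleyBoundary S A)ᶜ v ⊂
      cayleyComponent S (cayleyBoundary S A)ᶜ v := by
  set B := cayleyBoundary S A
  set K := cayleyComponent S Bᶜ v
  have hKB : K ⊆ x • Bᶜ := by
    rw [smul_set_compl]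
    rintro z hz ⟨b, hb, rfl⟩
    exact hKA hz (hxB b hb)
  have hsub : x⁻¹ • K ⊆ cayleyComponent S Bᶜ (x⁻¹ * v) := by
    rintro _ ⟨z, hz, rfl⟩
    have := (hz.in_cayleyComponent.mono hKB).smul x⁻¹
    rwa [inv_smul_smul] at this
  have hK' := hK.smul_set.mono hsub
  have hvA : x⁻¹ * v ∉ A := by
    intro hvA
    refine hK ((mem_almostStabilizer.1 hxH).subset fun z hz =>
      mem_symmDiff.2 (.inl ⟨?_, hKA hz⟩))
    rw [mem_smul_set_iff_inv_smul_mem]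
    exact (hsub (smul_mem_smul_set hz)).mem_iff.1 hvA
  have hK'A : cayleyComponent S Bᶜ (x⁻¹ * v) ⊆ Aᶜ := fun z hz hzA => hvA (hz.mem_iff.2 hzA)
  have heq := hG.cayleyComponent_eq_of_subset_compl hS hgen (hA.finite_cayleyBoundary hS) hA
    hAi hK' hK hK'A hKA
  refine ⟨hsub.trans heq.le, fun h => ?_⟩
  have hv := h (Relation.ReflTransGen.refl : v ∈ K)
  rw [mem_smul_set_iff_inv_smul_mem, inv_inv, smul_eq_mul] at hv
  exact hKA hv hxv

theorem exists_not_isOfFinOrder_of_infinite_inter (hG : AtMostTwoEnds G) (hS : S.Finite)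
    (hgen : Subgroup.closure S = ⊤) (hA : AlmostInvariant A) (hAi : A.Infinite)
    (hAci : Aᶜ.Infinite) (hHA : ((almostStabilizer G A : Set G) ∩ A).Infinite) :
    ∃ x ∈ almostStabilizer G A, ¬ IsOfFinOrder x := by
  set B := cayleyBoundary S A
  have hB : B.Finite := hA.finite_cayleyBoundary hS
  obtain ⟨v, -, hvK⟩ := exists_infinite_inter_cayleyComponent hS hgen hB
    (cayleyBoundary_nonempty hgen hAi.nonempty hAci.nonempty) hAci
  have hKA : cayleyComponent S Bᶜ v ⊆ Aᶜ := by
    obtain ⟨w, hw, hwA⟩ := hvK.nonempty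
    exact fun z hz hzA => hwA ((hw.symm.trans hz).mem_iff.2 hzA)
  have hbad : (⋃ y ∈ insert v B, A \ op y⁻¹ • A).Finite :=
    (hB.insert v).biUnion fun y _ => (almostInvariant_iff.1 hA y⁻¹).subset fun z hz =>
      mem_symmDiff.2 (.inr hz)
  obtain ⟨x, ⟨hxH, hxA⟩, hxbad⟩ := (hHA.sdiff hbad).nonempty
  have hxF : ∀ y ∈ insert v B, x * y ∈ A := fun y hy => by_contra fun hxy => hxbad
    (mem_biUnion hy ⟨hxA, by rwa [mem_smul_set_iff_inv_smul_mem, ← op_inv, inv_inv,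
      op_smul_eq_mul]⟩)
  exact ⟨x, hxH, fun hx => not_isOfFinOrder_of_smul_ssubset (hG.inv_smul_cayleyComponent_ssubset
    hS hgen hA hAi (hvK.mono inter_subset_left) hKA hxH (fun b hb => hxF b (mem_insert_of_mem _ hb))
    (hxF v (mem_insert v B))) hx.inv⟩

theorem exists_mem_almostStabilizer_not_isOfFinOrder [Group.FG G] (hG : AtMostTwoEnds G)
    (hA : AlmostInvariant A) (hAi : A.Infinite) (hAci : Aᶜ.Infinite) :
    ∃ x ∈ almostStabilizer G A, ¬ IsOfFinOrder x := by
  obtain ⟨S, hgen, hS⟩ := Group.fg_iff.1 ‹Group.FG G›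
  have := hG.finiteIndex_almostStabilizer hA hAi hAci
  have : Infinite G := infinite_univ_iff.1 (hAi.mono (subset_univ A))
  have hH := (almostStabilizer G A).infinite_of_finiteIndex
  rw [← inter_union_compl (almostStabilizer G A : Set G) A, infinite_union] at hH
  rcases hH with hH | hH
  · exact hG.exists_not_isOfFinOrder_of_infinite_inter hS hgen hA hAi hAci hH
  · simpa using hG.exists_not_isOfFinOrder_of_infinite_inter hS hgen hA.compl hAci
      (by rwa [compl_compl]) (by simpa using hH)

end AtMostTwoEnds

end TwoEnds

/-- Theorem 5.12: a countable group with exactly two ends (it has two disjoint infinite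
almost invariant subsets but no three pairwise disjoint ones) is finitely generated and
contains an infinite cyclic subgroup of finite index. -/
theorem two_ends_implies_virtually_cyclic
    {G : Type*} [Group G] [Countable G]
    (h2 : ∃ A B : Set G, A.Infinite ∧ AlmostInvariant A ∧ B.Infinite ∧
      AlmostInvariant B ∧ Disjoint A B)
    (h3 : ¬ ∃ A : Fin 3 → Set G, (∀ i, (A i).Infinite ∧ AlmostInvariant (A i)) ∧
      Pairwise (Function.onFun Disjoint A)) :
    Group.FG G ∧ ∃ g : G, ¬ IsOfFinOrder g ∧ (Subgroup.zpowers g).FiniteIndex := by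
  obtain ⟨A, B, hAi, hA, hBi, -, hAB⟩ := h2
  have hG : AtMostTwoEnds G := h3
  have hAci : Aᶜ.Infinite := hBi.mono hAB.subset_compl_left
  have := hG.group_fg hA hAi hAci
  obtain ⟨x, hxH, hx⟩ := hG.exists_mem_almostStabilizer_not_isOfFinOrder hA hAi hAci
  have hfg : (Subgroup.zpowers x).FG :=
    ⟨{x}, by rw [Finset.coe_singleton, Subgroup.zpowers_eq_closure]⟩
  exact ⟨this, x, hx, finiteIndex_of_fg_of_le_almostStabilizer hA hAi hAci hfg
    (infinite_zpowers.2 hx) (Subgroup.zpowers_le.2 hxH)⟩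
end
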